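/- arXiv:1209.5660 — 3 statements merged into one kernel-verified Lean document; each statement's English description precedes it below -/
import Mathlib

section
/- If P is a set of PBW filtered quadratic relations, then ⟨P⟩ ∩ F^2(T) = T^0 P T^0, the T^0-bimodule generated by P. -/
/-!
Write `I = ⟨P⟩` and `J = ⟨π P⟩`. Since `J` is generated in degree 2, its elements have no
components below degree 2, and its degree-2 part is `T⁰ (π P) T⁰ = π (T⁰ P T⁰)`. The PBW condition
puts `LH z` in `J` for every `z ∈ I`; for `z ∈ I ∩ F²` the leading degree is at most 2, so it is
exactly 2, i.e. `LH z = π z`. Hence `π` is injective on `I ∩ F²`, and an `x ∈ I ∩ F²` equals any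
`y ∈ T⁰ P T⁰` with `π y = π x`, which exists because `π x = LH x ∈ J`.
-/

/-- The `m`-th filtered component of a graded algebra. -/
def filt {k T : Type*} [CommSemiring k] [Ring T] [Algebra k T]
    (𝒜 : ℕ → Submodule k T) (m : ℕ) : Submodule k T :=
  ⨆ i ≤ m, 𝒜 i

/-- The leading homogeneous part of an element of a graded algebra. -/
noncomputable def LH {k T : Type*} [CommSemiring k] [Ring T] [Algebra k T]
    (𝒜 : ℕ → Submodule k T) [GradedAlgebra 𝒜] (f : T) : T :=
  GradedAlgebra.proj 𝒜 (sSup {i | GradedAlgebra.proj 𝒜 i f ≠ 0}) f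

/-- The two-sided ideal generated by a subset, as a `k`-submodule. -/
def twoSidedSpan (k : Type*) {T : Type*} [CommSemiring k] [Ring T] [Algebra k T]
    (P : Set T) : Submodule k T :=
  Submodule.span k {x | ∃ a b : T, ∃ p ∈ P, x = a * p * b}

/-- The `T⁰`-bimodule generated by a subset `P`, i.e. `T⁰ P T⁰`. -/
def bimodSpan (k : Type*) {T : Type*} [CommSemiring k] [Ring T] [Algebra k T]
    (𝒜 : ℕ → Submodule k T) (P : Set T) : Submodule k T :=
  Submodule.span k {x | ∃ a ∈ 𝒜 0, ∃ p ∈ P, ∃ b ∈ 𝒜 0, x = a * p * b}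

open DirectSum Finset GradedAlgebra

section

variable {k T : Type*} [CommSemiring k] [Ring T] [Algebra k T] (𝒜 : ℕ → Submodule k T)

theorem subset_twoSidedSpan (Q : Set T) : Q ⊆ twoSidedSpan k Q :=
  fun q hq => Submodule.subset_span ⟨1, 1, q, hq, by rw [one_mul, mul_one]⟩

theorem bimodSpan_le_twoSidedSpan (P : Set T) : bimodSpan k 𝒜 P ≤ twoSidedSpan k P :=
  Submodule.span_mono fun _ ⟨a, _, p, hp, b, _, hx⟩ => ⟨a, b, p, hp, hx⟩

variable [GradedAlgebra 𝒜]

namespace GradedAlgebra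

variable {𝒜}

theorem proj_mem (i : ℕ) (x : T) : proj 𝒜 i x ∈ 𝒜 i := by
  rw [proj_apply]
  exact SetLike.coe_mem _

theorem proj_of_mem {i : ℕ} {x : T} (hx : x ∈ 𝒜 i) : proj 𝒜 i x = x := by
  rw [proj_apply, decompose_of_mem_same 𝒜 hx]

theorem proj_of_mem_of_ne {i j : ℕ} {x : T} (hx : x ∈ 𝒜 i) (hij : i ≠ j) : proj 𝒜 j x = 0 := by
  rw [proj_apply, decompose_of_mem_ne 𝒜 hx hij]

theorem eq_zero_of_forall_proj_eq_zero {x : T} (hx : ∀ i, proj 𝒜 i x = 0) : x = 0 := by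
  have : decompose 𝒜 x = 0 := DFinsupp.ext fun i => by
    simpa [proj_apply] using hx i
  simpa using congrArg (decompose 𝒜).symm this

theorem proj_mul_mul_of_mem_zero {a b : T} (ha : a ∈ 𝒜 0) (hb : b ∈ 𝒜 0) (i : ℕ) (x : T) :
    proj 𝒜 i (a * x * b) = a * proj 𝒜 i x * b := by
  simp only [proj_apply, coe_decompose_mul_of_right_mem_zero 𝒜 hb,
    coe_decompose_mul_of_left_mem_zero 𝒜 ha]

variable (𝒜) in
theorem proj_mul_eq_sum_antidiagonal (a x : T) (n : ℕ) :
    proj 𝒜 n (a * x) = ∑ ij ∈ antidiagonal n, proj 𝒜 ij.1 a * proj 𝒜 ij.2 x := by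
  simp only [proj_apply, decompose_mul, coe_mul_apply_eq_sum_antidiagonal]

variable (𝒜) in
theorem image_proj_subset (P : Set T) (n : ℕ) : proj 𝒜 n '' P ⊆ 𝒜 n :=
  Set.image_subset_iff.2 fun p _ => proj_mem n p

variable {n : ℕ} {x : T}

theorem proj_mul_left_eq_zero (hx : ∀ j < n, proj 𝒜 j x = 0) (a : T) {d : ℕ} (hd : d < n) :
    proj 𝒜 d (a * x) = 0 := by
  rw [proj_mul_eq_sum_antidiagonal]
  refine sum_eq_zero fun ij hij => ?_
  rw [hx ij.2 (by rw [HasAntidiagonal.mem_antidiagonal] at hij; omega), mul_zero]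

theorem proj_mul_right_eq_zero (hx : ∀ j < n, proj 𝒜 j x = 0) (a : T) {d : ℕ} (hd : d < n) :
    proj 𝒜 d (x * a) = 0 := by
  rw [proj_mul_eq_sum_antidiagonal]
  refine sum_eq_zero fun ij hij => ?_
  rw [hx ij.1 (by rw [HasAntidiagonal.mem_antidiagonal] at hij; omega), zero_mul]

theorem proj_mul_left_eq_proj_zero_mul (hx : ∀ j < n, proj 𝒜 j x = 0) (a : T) :
    proj 𝒜 n (a * x) = proj 𝒜 0 a * proj 𝒜 n x := by
  rw [proj_mul_eq_sum_antidiagonal, sum_eq_single (0, n) _ (by simp)]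
  rintro ⟨i, j⟩ hij hne
  rw [HasAntidiagonal.mem_antidiagonal] at hij
  rw [hx j (by grind), mul_zero]

theorem proj_mul_right_eq_mul_proj_zero (hx : ∀ j < n, proj 𝒜 j x = 0) (a : T) :
    proj 𝒜 n (x * a) = proj 𝒜 n x * proj 𝒜 0 a := by
  rw [proj_mul_eq_sum_antidiagonal, sum_eq_single (n, 0) _ (by simp)]
  rintro ⟨i, j⟩ hij hne
  rw [HasAntidiagonal.mem_antidiagonal] at hij
  rw [hx i (by grind), zero_mul]

theorem proj_mul_mul_eq_zero_of_lt {q : T} (hq : q ∈ 𝒜 n) (a b : T) {d : ℕ} (hd : d < n) :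
    proj 𝒜 d (a * q * b) = 0 :=
  proj_mul_right_eq_zero (fun _ hj => proj_mul_left_eq_zero
    (fun _ hi => proj_of_mem_of_ne hq hi.ne') a hj) b hd

theorem proj_mul_mul_of_mem {q : T} (hq : q ∈ 𝒜 n) (a b : T) :
    proj 𝒜 n (a * q * b) = proj 𝒜 0 a * q * proj 𝒜 0 b := by
  have hq_low : ∀ j < n, proj 𝒜 j q = 0 := fun _ hj => proj_of_mem_of_ne hq hj.ne'
  rw [proj_mul_right_eq_mul_proj_zero (fun _ hj => proj_mul_left_eq_zero hq_low a hj),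
    proj_mul_left_eq_proj_zero_mul hq_low, proj_of_mem hq]

end GradedAlgebra

section Spans

variable {𝒜} {n : ℕ} {Q : Set T}

theorem proj_eq_zero_of_mem_twoSidedSpan (hQ : Q ⊆ 𝒜 n) {z : T} (hz : z ∈ twoSidedSpan k Q)
    {d : ℕ} (hd : d < n) : proj 𝒜 d z = 0 := by
  suffices twoSidedSpan k Q ≤ LinearMap.ker (proj 𝒜 d) from this hz
  refine Submodule.span_le.2 ?_
  rintro _ ⟨a, b, q, hq, rfl⟩
  exact proj_mul_mul_eq_zero_of_lt (hQ hq) a b hd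

theorem proj_mem_bimodSpan_of_mem_twoSidedSpan (hQ : Q ⊆ 𝒜 n) {z : T}
    (hz : z ∈ twoSidedSpan k Q) : proj 𝒜 n z ∈ bimodSpan k 𝒜 Q := by
  suffices twoSidedSpan k Q ≤ (bimodSpan k 𝒜 Q).comap (proj 𝒜 n) from this hz
  refine Submodule.span_le.2 ?_
  rintro _ ⟨a, b, q, hq, rfl⟩
  rw [SetLike.mem_coe, Submodule.mem_comap, proj_mul_mul_of_mem (hQ hq)]
  exact Submodule.subset_span ⟨_, proj_mem 0 a, q, hq, _, proj_mem 0 b, rfl⟩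

variable (𝒜) in
theorem bimodSpan_image_proj (P : Set T) (n : ℕ) :
    bimodSpan k 𝒜 (proj 𝒜 n '' P) = (bimodSpan k 𝒜 P).map (proj 𝒜 n) := by
  rw [bimodSpan, bimodSpan, Submodule.map_span]
  congr 1
  ext x
  constructor
  · rintro ⟨a, ha, _, ⟨p, hp, rfl⟩, b, hb, rfl⟩
    exact ⟨a * p * b, ⟨a, ha, p, hp, b, hb, rfl⟩, proj_mul_mul_of_mem_zero ha hb n p⟩
  · rintro ⟨_, ⟨a, ha, p, hp, b, hb, rfl⟩, rfl⟩
    exact ⟨a, ha, _, ⟨p, hp, rfl⟩, b, hb, proj_mul_mul_of_mem_zero ha hb n p⟩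

end Spans

section Filtration

variable {𝒜} {m : ℕ}

theorem mem_filt_iff {x : T} : x ∈ filt 𝒜 m ↔ ∀ i, m < i → proj 𝒜 i x = 0 := by
  classical
  constructor
  · intro hx i hi
    suffices filt 𝒜 m ≤ LinearMap.ker (proj 𝒜 i) from this hx
    exact iSup₂_le fun j hj y hy => proj_of_mem_of_ne hy (by omega)
  · intro h
    rw [← sum_support_decompose 𝒜 x]
    refine Submodule.sum_mem _ fun i hi => ?_
    have him : i ≤ m := not_lt.1 fun hmi =>
      DFinsupp.mem_support_iff.1 hi (by simpa [proj_apply] using h i hmi)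
    exact le_iSup₂ (f := fun i (_ : i ≤ m) => 𝒜 i) i him (SetLike.coe_mem _)

theorem bimodSpan_le_filt {P : Set T} (hP : P ⊆ filt 𝒜 m) : bimodSpan k 𝒜 P ≤ filt 𝒜 m := by
  refine Submodule.span_le.2 ?_
  rintro _ ⟨a, ha, p, hp, b, hb, rfl⟩
  refine mem_filt_iff.2 fun i hi => ?_
  rw [proj_mul_mul_of_mem_zero ha hb, mem_filt_iff.1 (hP hp) i hi, mul_zero, zero_mul]

end Filtration

/-- The degree selected in `LH`; note `leadDeg 𝒜 0 = sSup ∅ = 0`. -/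
noncomputable def leadDeg (z : T) : ℕ := sSup {i | proj 𝒜 i z ≠ 0}

section LeadingPart

variable {𝒜}

theorem LH_eq_proj_leadDeg (z : T) : LH 𝒜 z = proj 𝒜 (leadDeg 𝒜 z) z := rfl

theorem LH_mem (z : T) : LH 𝒜 z ∈ 𝒜 (leadDeg 𝒜 z) := proj_mem _ z

theorem leadDeg_le_of_mem_filt {m : ℕ} {z : T} (hz : z ∈ filt 𝒜 m) : leadDeg 𝒜 z ≤ m :=
  csSup_le' fun i hi => not_lt.1 fun hmi => hi (mem_filt_iff.1 hz i hmi)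

theorem LH_eq_zero_iff {z : T} : LH 𝒜 z = 0 ↔ z = 0 := by
  classical
  refine ⟨fun h => ?_, by rintro rfl; rw [LH_eq_proj_leadDeg, map_zero]⟩
  by_contra hz
  have hne : {i | proj 𝒜 i z ≠ 0}.Nonempty := by
    by_contra hempty
    exact hz (eq_zero_of_forall_proj_eq_zero fun i => not_not.1 fun hi => hempty ⟨i, hi⟩)
  have hbdd : BddAbove {i | proj 𝒜 i z ≠ 0} := by
    refine ((decompose 𝒜 z).support.finite_toSet.subset fun i hi => ?_).bddAbove
    exact DFinsupp.mem_support_iff.2 fun h0 => hi (by rw [proj_apply, h0, ZeroMemClass.coe_zero])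
  exact Nat.sSup_mem hne hbdd h

end LeadingPart

def IsPBW (P : Set T) : Prop :=
  twoSidedSpan k (proj 𝒜 2 '' P) = twoSidedSpan k (LH 𝒜 '' (twoSidedSpan k P : Set T))

section PBW

variable {𝒜} {P : Set T}

theorem LH_mem_twoSidedSpan_of_isPBW (hPBW : IsPBW 𝒜 P) {z : T} (hz : z ∈ twoSidedSpan k P) :
    LH 𝒜 z ∈ twoSidedSpan k (proj 𝒜 2 '' P) :=
  hPBW ▸ subset_twoSidedSpan _ ⟨z, hz, rfl⟩

theorem LH_eq_proj_two_of_isPBW (hPBW : IsPBW 𝒜 P) {z : T} (hzI : z ∈ twoSidedSpan k P)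
    (hzF : z ∈ filt 𝒜 2) : LH 𝒜 z = proj 𝒜 2 z := by
  obtain rfl | hz0 := eq_or_ne z 0
  · rw [LH_eq_zero_iff.2 rfl, map_zero]
  rcases (leadDeg_le_of_mem_filt hzF).lt_or_eq with hlt | heq
  · refine absurd ?_ (mt (LH_eq_zero_iff (𝒜 := 𝒜)).1 hz0)
    rw [← proj_of_mem (LH_mem z)]
    exact proj_eq_zero_of_mem_twoSidedSpan (image_proj_subset 𝒜 P 2)
      (LH_mem_twoSidedSpan_of_isPBW hPBW hzI) hlt
  · rw [LH_eq_proj_leadDeg, heq]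

end PBW

end

/-- if `P ⊆ F²(T)` is a set of PBW filtered quadratic relations,
then `⟨P⟩ ∩ F²(T) = T⁰ P T⁰`. -/
theorem stmt2 {k T : Type*} [Field k] [Ring T] [Algebra k T]
    (𝒜 : ℕ → Submodule k T) [GradedAlgebra 𝒜]
    (P : Set T) (hP : P ⊆ (filt 𝒜 2 : Set T))
    (hPBW : twoSidedSpan k ((GradedAlgebra.proj 𝒜 2 : T →ₗ[k] T) '' P) =
      twoSidedSpan k (LH 𝒜 '' (twoSidedSpan k P : Set T))) :
    twoSidedSpan k P ⊓ filt 𝒜 2 = bimodSpan k 𝒜 P := by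
  refine le_antisymm ?_ (le_inf (bimodSpan_le_twoSidedSpan 𝒜 P) (bimodSpan_le_filt hP))
  rintro x ⟨hxI, hxF⟩
  obtain ⟨y, hy, hyx⟩ : proj 𝒜 2 x ∈ (bimodSpan k 𝒜 P).map (proj 𝒜 2) := by
    have h := proj_mem_bimodSpan_of_mem_twoSidedSpan (image_proj_subset 𝒜 P 2)
      (LH_mem_twoSidedSpan_of_isPBW hPBW hxI)
    rwa [LH_eq_proj_two_of_isPBW hPBW hxI hxF, proj_of_mem (proj_mem 2 x),
      bimodSpan_image_proj] at h
  have hxy : LH 𝒜 (x - y) = 0 := by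
    rw [LH_eq_proj_two_of_isPBW hPBW (sub_mem hxI (bimodSpan_le_twoSidedSpan 𝒜 P hy))
      (sub_mem hxF (bimodSpan_le_filt hP hy)), map_sub, hyx, sub_self]
  rwa [sub_eq_zero.1 (LH_eq_zero_iff.1 hxy)]
end

section
/- Let V have basis {x,y} over k and let I be the ideal of T(V) generated by P' = {xy - x, yx - y, x² - x, y² - y}. Then ⟨xy - x, yx - y⟩ = I, and gr(T(V)/I) is isomorphic as a graded algebra to T(V)/⟨xy, yx, x², y²⟩; i.e., T(V)/I is of PBW type with respect to P'. -/
/-!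
The relations force `x² - x = (xy - x) - (xy - x)x + x(yx - y)` (and symmetrically for `y`),
which gives the equality of ideals. For the PBW property, every leading part `xy, yx, x², y²`
of a relation lies in `⟨LH(I)⟩`; conversely, `I` contains no nonzero element of degree `≤ 1`,
because the representation `x ↦ !![1, 0; 0, 0]`, `y ↦ !![1, 0; 1, 0]` of `T(V)` kills `I` but is
injective on `k ⊕ V`. So the leading part of any element of `I` is homogeneous of degree `≥ 2`,
hence lies in the ideal generated by the quadratic monomials.
-/

section TwoSidedSpan

variable {k T : Type*} [CommSemiring k] [Ring T] [Algebra k T] {P Q : Set T}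

theorem subset_twoSidedSpan_s6 : P ⊆ twoSidedSpan k P :=
  fun p hp => Submodule.subset_span ⟨1, 1, p, hp, by simp⟩

theorem twoSidedSpan_le {N : Submodule k T} (h : ∀ p ∈ P, ∀ a c : T, a * p * c ∈ N) :
    twoSidedSpan k P ≤ N :=
  Submodule.span_le.2 <| by rintro _ ⟨a, c, p, hp, rfl⟩; exact h p hp a c

theorem mul_mul_mem_twoSidedSpan {m : T} (hm : m ∈ twoSidedSpan k P) (a c : T) :
    a * m * c ∈ twoSidedSpan k P := by
  induction hm using Submodule.span_induction with
  | mem z hz =>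
    obtain ⟨a', c', p, hp, rfl⟩ := hz
    exact Submodule.subset_span ⟨a * a', c' * c, p, hp, by noncomm_ring⟩
  | zero => simp
  | add z w _ _ hz hw => simpa [mul_add, add_mul] using Submodule.add_mem _ hz hw
  | smul r z _ hz => simpa using Submodule.smul_mem _ r hz

theorem twoSidedSpan_le_twoSidedSpan (h : P ⊆ twoSidedSpan k Q) :
    twoSidedSpan k P ≤ twoSidedSpan k Q :=
  twoSidedSpan_le fun _ hp a c => mul_mul_mem_twoSidedSpan (h hp) a c

theorem mul_le_twoSidedSpan {M N : Submodule k T} (h : N ≤ twoSidedSpan k P) :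
    M * N ≤ twoSidedSpan k P :=
  Submodule.mul_le.2 fun m _ n hn => by simpa using mul_mul_mem_twoSidedSpan (h hn) m 1

theorem twoSidedSpan_le_ker {A : Type*} [Semiring A] [Algebra k A] (φ : T →ₐ[k] A)
    (h : ∀ p ∈ P, φ p = 0) : twoSidedSpan k P ≤ LinearMap.ker φ.toLinearMap :=
  twoSidedSpan_le fun p hp a c => by simp [h p hp]

theorem sq_sub_self_mem_twoSidedSpan (x y : T) :
    x * x - x ∈ twoSidedSpan k {x * y - x, y * x - y} := by
  have hxy : x * y - x ∈ twoSidedSpan k {x * y - x, y * x - y} := subset_twoSidedSpan_s6 (by simp)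
  have hyx : y * x - y ∈ twoSidedSpan k {x * y - x, y * x - y} := subset_twoSidedSpan_s6 (by simp)
  have key : x * x - x = 1 * (x * y - x) * 1 + (-1) * (x * y - x) * x + x * (y * x - y) * 1 := by
    noncomm_ring
  rw [key]
  exact Submodule.add_mem _ (Submodule.add_mem _ (mul_mul_mem_twoSidedSpan hxy 1 1)
    (mul_mul_mem_twoSidedSpan hxy (-1) x)) (mul_mul_mem_twoSidedSpan hyx x 1)

theorem twoSidedSpan_pair_eq (x y : T) :
    twoSidedSpan k {x * y - x, y * x - y} =
      twoSidedSpan k {x * y - x, y * x - y, x * x - x, y * y - y} := by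
  refine le_antisymm (twoSidedSpan_le_twoSidedSpan ?_) (twoSidedSpan_le_twoSidedSpan ?_)
  · exact Set.Subset.trans (by simp [Set.insert_subset_iff]) subset_twoSidedSpan_s6
  · rintro _ (rfl | rfl | rfl | rfl)
    · exact subset_twoSidedSpan_s6 (by simp)
    · exact subset_twoSidedSpan_s6 (by simp)
    · exact sq_sub_self_mem_twoSidedSpan x y
    · rw [Set.pair_comm]
      exact sq_sub_self_mem_twoSidedSpan y x

end TwoSidedSpan

section LeadingPart

open GradedAlgebra DirectSum

variable {k A : Type*} [CommSemiring k] [Ring A] [Algebra k A]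
  (𝒜 : ℕ → Submodule k A) [GradedAlgebra 𝒜]

/-- The degree of the leading homogeneous part; `0` when `f = 0`, as `sSup ∅ = 0`. -/
noncomputable def leadingDegree (f : A) : ℕ :=
  sSup {i | proj 𝒜 i f ≠ 0}

theorem LH_eq_proj_leadingDegree (f : A) : LH 𝒜 f = proj 𝒜 (leadingDegree 𝒜 f) f :=
  rfl

theorem LH_mem_s6 (f : A) : LH 𝒜 f ∈ 𝒜 (leadingDegree 𝒜 f) :=
  Submodule.coe_mem _

@[simp]
theorem LH_zero : LH 𝒜 (0 : A) = 0 :=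
  map_zero _

theorem bddAbove_proj_ne_zero (f : A) : BddAbove {i | proj 𝒜 i f ≠ 0} := by
  classical
  exact (decompose 𝒜 f).support.bddAbove.mono fun i hi => (mem_support_iff 𝒜 f i).2 hi

theorem proj_eq_zero_of_leadingDegree_lt {f : A} {i : ℕ} (hi : leadingDegree 𝒜 f < i) :
    proj 𝒜 i f = 0 := by
  by_contra h
  exact hi.not_ge (le_csSup (bddAbove_proj_ne_zero 𝒜 f) h)

theorem leadingDegree_eq {f : A} {d : ℕ} (hd : proj 𝒜 d f ≠ 0)
    (h : ∀ i, d < i → proj 𝒜 i f = 0) : leadingDegree 𝒜 f = d :=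
  IsGreatest.csSup_eq ⟨hd, fun i hi => not_lt.1 fun hlt => hi (h i hlt)⟩

theorem sum_range_proj_leadingDegree (f : A) :
    ∑ i ∈ Finset.range (leadingDegree 𝒜 f + 1), proj 𝒜 i f = f := by
  classical
  conv_rhs => rw [← sum_support_decompose 𝒜 f]
  refine (Finset.sum_subset (fun i hi => ?_) fun i _ hi => ?_).symm
  · exact Finset.mem_range_succ_iff.2 <|
      le_csSup (bddAbove_proj_ne_zero 𝒜 f) ((mem_support_iff 𝒜 f i).1 hi)
  · exact not_not.1 fun h => hi ((mem_support_iff 𝒜 f i).2 h)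

theorem LH_sub_of_lt {u w : A} {m n : ℕ} (hu : u ∈ 𝒜 m) (hu0 : u ≠ 0) (hw : w ∈ 𝒜 n)
    (hnm : n < m) : LH 𝒜 (u - w) = u := by
  have hm : proj 𝒜 m (u - w) = u := by
    rw [map_sub, proj_apply, proj_apply, decompose_of_mem_same 𝒜 hu,
      decompose_of_mem_ne 𝒜 hw hnm.ne, sub_zero]
  have hdeg : leadingDegree 𝒜 (u - w) = m := by
    refine leadingDegree_eq 𝒜 (by rwa [hm]) fun i hi => ?_
    rw [map_sub, proj_apply, proj_apply, decompose_of_mem_ne 𝒜 hu hi.ne,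
      decompose_of_mem_ne 𝒜 hw (hnm.trans hi).ne, sub_zero]
  rw [LH_eq_proj_leadingDegree, hdeg, hm]

end LeadingPart

section TensorAlgebra

open GradedAlgebra

variable {k V : Type*} [CommRing k] [AddCommGroup V] [Module k V]

local notation "𝒯" =>
  fun n : ℕ => LinearMap.range (TensorAlgebra.ι k : V →ₗ[k] TensorAlgebra k V) ^ n

theorem exists_eq_algebraMap_add_ι_of_leadingDegree_le_one {f : TensorAlgebra k V}
    (h : leadingDegree 𝒯 f ≤ 1) :
    ∃ (c : k) (v : V), f = algebraMap k (TensorAlgebra k V) c + TensorAlgebra.ι k v := by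
  have hf : f = proj 𝒯 0 f + proj 𝒯 1 f := by
    conv_lhs => rw [← sum_range_proj_leadingDegree 𝒯 f]
    rw [Finset.sum_subset (Finset.range_subset_range.2 (by omega : leadingDegree 𝒯 f + 1 ≤ 2))
      fun i _ hi => proj_eq_zero_of_leadingDegree_lt 𝒯 (by simp only [Finset.mem_range, not_lt] at hi; omega)]
    simp [Finset.sum_range_succ]
  have h0 : proj 𝒯 0 f ∈ (1 : Submodule k (TensorAlgebra k V)) := by
    simpa using Submodule.coe_mem (DirectSum.decompose 𝒯 f 0)
  have h1 : proj 𝒯 1 f ∈ LinearMap.range (TensorAlgebra.ι k : V →ₗ[k] TensorAlgebra k V) := by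
    simpa using Submodule.coe_mem (DirectSum.decompose 𝒯 f 1)
  obtain ⟨c, hc⟩ := Submodule.mem_one.1 h0
  obtain ⟨v, hv⟩ := h1
  exact ⟨c, v, by rw [hc, hv]; exact hf⟩

theorem LH_ι_mul_ι_sub_ι {u v w : V} (h : TensorAlgebra.ι k u * TensorAlgebra.ι k v ≠ 0) :
    LH 𝒯 (TensorAlgebra.ι k u * TensorAlgebra.ι k v - TensorAlgebra.ι k w) =
      TensorAlgebra.ι k u * TensorAlgebra.ι k v :=
  LH_sub_of_lt 𝒯 (by rw [pow_two]; exact Submodule.mul_mem_mul ⟨u, rfl⟩ ⟨v, rfl⟩) h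
    (by rw [pow_one]; exact ⟨w, rfl⟩) one_lt_two

theorem pow_range_ι_add_two_le_twoSidedSpan {κ : Type*} (b : Module.Basis κ k V) (n : ℕ) :
    LinearMap.range (TensorAlgebra.ι k : V →ₗ[k] TensorAlgebra k V) ^ (n + 2) ≤
      twoSidedSpan k
        (Set.range fun ij : κ × κ => TensorAlgebra.ι k (b ij.1) * TensorAlgebra.ι k (b ij.2)) := by
  have hrange : LinearMap.range (TensorAlgebra.ι k : V →ₗ[k] TensorAlgebra k V) =
      Submodule.span k (Set.range fun i => TensorAlgebra.ι k (b i)) := by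
    rw [LinearMap.range_eq_map, ← b.span_eq, Submodule.map_span, ← Set.range_comp]
    rfl
  have hsq : LinearMap.range (TensorAlgebra.ι k : V →ₗ[k] TensorAlgebra k V) ^ 2 ≤
      twoSidedSpan k
        (Set.range fun ij : κ × κ => TensorAlgebra.ι k (b ij.1) * TensorAlgebra.ι k (b ij.2)) := by
    rw [pow_two, hrange, Submodule.span_mul_span, Submodule.span_le]
    rintro _ ⟨_, ⟨i, rfl⟩, _, ⟨j, rfl⟩, rfl⟩
    exact subset_twoSidedSpan_s6 ⟨(i, j), rfl⟩
  rw [pow_add]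
  exact mul_le_twoSidedSpan hsq

section Representation

variable (b : Module.Basis (Fin 2) k V)

local notation "𝐱" => TensorAlgebra.ι k (b 0)
local notation "𝐲" => TensorAlgebra.ι k (b 1)

/-- The images `X`, `Y` of `x`, `y` are idempotents with `XY = X` and `YX = Y`, so this
representation factors through `T(V)/I`. -/
noncomputable def idemRep : TensorAlgebra k V →ₐ[k] Matrix (Fin 2) (Fin 2) k :=
  TensorAlgebra.lift k
    (b.constr k ![!![1, 0; 0, 0], !![1, 0; 1, 0]] : V →ₗ[k] Matrix (Fin 2) (Fin 2) k)

theorem idemRep_ι (v : V) :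
    idemRep b (TensorAlgebra.ι k v) = !![b.repr v 0 + b.repr v 1, 0; b.repr v 1, 0] := by
  rw [idemRep, TensorAlgebra.lift_ι_apply, Module.Basis.constr_apply_fintype, Fin.sum_univ_two]
  ext i j
  fin_cases i <;> fin_cases j <;> simp

theorem twoSidedSpan_le_ker_idemRep :
    twoSidedSpan k {𝐱 * 𝐲 - 𝐱, 𝐲 * 𝐱 - 𝐲, 𝐱 * 𝐱 - 𝐱, 𝐲 * 𝐲 - 𝐲} ≤
      LinearMap.ker (idemRep b).toLinearMap := by
  refine twoSidedSpan_le_ker _ ?_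
  rintro _ (rfl | rfl | rfl | rfl) <;> simp [idemRep_ι, ← Matrix.ext_iff, Fin.forall_fin_two]

theorem eq_zero_of_idemRep_algebraMap_add_ι {c : k} {v : V}
    (h : idemRep b (algebraMap k (TensorAlgebra k V) c + TensorAlgebra.ι k v) = 0) :
    algebraMap k (TensorAlgebra k V) c + TensorAlgebra.ι k v = 0 := by
  rw [map_add, AlgHom.commutes, idemRep_ι] at h
  have hc : c = 0 := by
    simpa [Matrix.algebraMap_matrix_apply] using congrFun (congrFun h 1) 1
  have hv1 : b.repr v 1 = 0 := by
    simpa [Matrix.algebraMap_matrix_apply] using congrFun (congrFun h 1) 0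
  have hv0 : b.repr v 0 = 0 := by
    simpa [Matrix.algebraMap_matrix_apply, hc, hv1] using congrFun (congrFun h 0) 0
  have hv : v = 0 := b.ext_elem fun i => by fin_cases i <;> simpa
  simp [hc, hv]

theorem ι_basis_mul_ι_basis_ne_zero [Nontrivial k] (i j : Fin 2) :
    TensorAlgebra.ι k (b i) * TensorAlgebra.ι k (b j) ≠ 0 := by
  intro h
  have h00 := congrFun (congrFun (congrArg (idemRep b) h) 0) 0
  fin_cases i <;> fin_cases j <;> simp [idemRep_ι] at h00

theorem LH_mem_twoSidedSpan_of_mem {f : TensorAlgebra k V}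
    (hf : f ∈ twoSidedSpan k {𝐱 * 𝐲 - 𝐱, 𝐲 * 𝐱 - 𝐲, 𝐱 * 𝐱 - 𝐱, 𝐲 * 𝐲 - 𝐲}) :
    LH 𝒯 f ∈ twoSidedSpan k {𝐱 * 𝐲, 𝐲 * 𝐱, 𝐱 * 𝐱, 𝐲 * 𝐲} := by
  obtain h | h := le_or_gt (leadingDegree 𝒯 f) 1
  · obtain ⟨c, v, rfl⟩ := exists_eq_algebraMap_add_ι_of_leadingDegree_le_one h
    rw [eq_zero_of_idemRep_algebraMap_add_ι b (twoSidedSpan_le_ker_idemRep b hf), LH_zero]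
    exact Submodule.zero_mem _
  · obtain ⟨n, hn⟩ := Nat.exists_eq_add_of_le' h
    have hmono : (Set.range fun ij : Fin 2 × Fin 2 =>
        TensorAlgebra.ι k (b ij.1) * TensorAlgebra.ι k (b ij.2)) ⊆ {𝐱 * 𝐲, 𝐲 * 𝐱, 𝐱 * 𝐱, 𝐲 * 𝐲} := by
      rintro _ ⟨⟨i, j⟩, rfl⟩
      fin_cases i <;> fin_cases j <;> simp
    refine twoSidedSpan_le_twoSidedSpan (hmono.trans subset_twoSidedSpan_s6)
      (pow_range_ι_add_two_le_twoSidedSpan b n ?_)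
    simpa [hn] using LH_mem_s6 𝒯 f

theorem quadratic_subset_twoSidedSpan_LH_image [Nontrivial k] :
    {𝐱 * 𝐲, 𝐲 * 𝐱, 𝐱 * 𝐱, 𝐲 * 𝐲} ⊆ (twoSidedSpan k (LH 𝒯 ''
      twoSidedSpan k {𝐱 * 𝐲 - 𝐱, 𝐲 * 𝐱 - 𝐲, 𝐱 * 𝐱 - 𝐱, 𝐲 * 𝐲 - 𝐲}) : Set (TensorAlgebra k V)) := by
  rintro _ (rfl | rfl | rfl | rfl)
  · exact subset_twoSidedSpan_s6 ⟨_, subset_twoSidedSpan_s6 (by simp),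
      LH_ι_mul_ι_sub_ι (w := b 0) (ι_basis_mul_ι_basis_ne_zero b 0 1)⟩
  · exact subset_twoSidedSpan_s6 ⟨_, subset_twoSidedSpan_s6 (by simp),
      LH_ι_mul_ι_sub_ι (w := b 1) (ι_basis_mul_ι_basis_ne_zero b 1 0)⟩
  · exact subset_twoSidedSpan_s6 ⟨_, subset_twoSidedSpan_s6 (by simp),
      LH_ι_mul_ι_sub_ι (w := b 0) (ι_basis_mul_ι_basis_ne_zero b 0 0)⟩
  · exact subset_twoSidedSpan_s6 ⟨_, subset_twoSidedSpan_s6 (by simp),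
      LH_ι_mul_ι_sub_ι (w := b 1) (ι_basis_mul_ι_basis_ne_zero b 1 1)⟩

end Representation

end TensorAlgebra

/-- for `P' = {xy - x, yx - y, x² - x, y² - y}` in `T(V)`,
`V = span{x,y}`: the ideal generated by `{xy - x, yx - y}` equals
`I = ⟨P'⟩`, and `T(V)/I` is of PBW type with respect to `P'`, i.e.
`⟨π(P')⟩ = ⟨xy, yx, x², y²⟩` equals `⟨LH(I)⟩`, so that
`gr(T(V)/I) ≅ T(V)/⟨xy, yx, x², y²⟩` as graded algebras. -/
theorem stmt6 {k V : Type*} [Field k] [AddCommGroup V] [Module k V]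
    (b : Module.Basis (Fin 2) k V) :
    letI 𝒜 : ℕ → Submodule k (TensorAlgebra k V) :=
      fun n => LinearMap.range (TensorAlgebra.ι k : V →ₗ[k] TensorAlgebra k V) ^ n
    letI x : TensorAlgebra k V := TensorAlgebra.ι k (b 0)
    letI y : TensorAlgebra k V := TensorAlgebra.ι k (b 1)
    letI I := twoSidedSpan k {x * y - x, y * x - y, x * x - x, y * y - y}
    twoSidedSpan k {x * y - x, y * x - y} = I ∧
      twoSidedSpan k {x * y, y * x, x * x, y * y} =
        twoSidedSpan k (LH 𝒜 '' (I : Set (TensorAlgebra k V))) := by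
  refine ⟨twoSidedSpan_pair_eq _ _, le_antisymm (twoSidedSpan_le_twoSidedSpan ?_)
    (twoSidedSpan_le_twoSidedSpan ?_)⟩
  · exact quadratic_subset_twoSidedSpan_LH_image b
  · rintro _ ⟨f, hf, rfl⟩
    exact LH_mem_twoSidedSpan_of_mem b hf
end

section
/- If P ⊆ F^2(T) is a set of filtered quadratic relations over B satisfying ⟨P⟩ ∩ F^1(T) = {0}, then there exist unique B-bimodule homomorphisms α : R → U and β : R → B, where R = π(P), such that P = { x − α(x) − β(x) : x ∈ R }. -/
open GradedAlgebra

section Filtration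

variable {k T : Type*} [CommSemiring k] [Ring T] [Algebra k T] (𝒜 : ℕ → Submodule k T)

lemma mem_filt_of_mem {i m : ℕ} (him : i ≤ m) {x : T} (hx : x ∈ 𝒜 i) : x ∈ filt 𝒜 m :=
  (le_iSup₂ (f := fun i (_ : i ≤ m) => 𝒜 i) i him) hx

variable [GradedAlgebra 𝒜]

lemma proj_of_mem_same {i : ℕ} {x : T} (hx : x ∈ 𝒜 i) : proj 𝒜 i x = x := by
  rw [proj_apply, DirectSum.decompose_of_mem_same 𝒜 hx]

lemma proj_of_mem_ne {i j : ℕ} {x : T} (hx : x ∈ 𝒜 i) (hij : i ≠ j) : proj 𝒜 j x = 0 := by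
  rw [proj_apply, DirectSum.decompose_of_mem_ne 𝒜 hx hij]

lemma sum_proj_of_mem_filt {m : ℕ} {x : T} (hx : x ∈ filt 𝒜 m) :
    ∑ i ∈ Finset.range (m + 1), proj 𝒜 i x = x := by
  suffices filt 𝒜 m ≤ LinearMap.ker (∑ i ∈ Finset.range (m + 1), proj 𝒜 i - LinearMap.id) by
    simpa [sub_eq_zero] using this hx
  refine iSup₂_le fun i hi y hy => ?_
  rw [LinearMap.mem_ker, LinearMap.sub_apply, LinearMap.sum_apply, LinearMap.id_apply,
    sub_eq_zero, Finset.sum_eq_single_of_mem i (Finset.mem_range.2 (Nat.lt_succ_of_le hi))]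
  · exact proj_of_mem_same 𝒜 hy
  · exact fun j _ hji => proj_of_mem_ne 𝒜 hy hji.symm

lemma proj_mul_mul_of_mem_zero {a b : T} (ha : a ∈ 𝒜 0) (hb : b ∈ 𝒜 0) (j : ℕ) (x : T) :
    proj 𝒜 j (a * x * b) = a * proj 𝒜 j x * b := by
  simp only [proj_apply, DirectSum.coe_decompose_mul_of_right_mem_zero 𝒜 hb,
    DirectSum.coe_decompose_mul_of_left_mem_zero 𝒜 ha]

end Filtration

section QuadraticRelations

variable {k T : Type*} [CommRing k] [Ring T] [Algebra k T] (𝒜 : ℕ → Submodule k T)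
  [GradedAlgebra 𝒜] {P : Submodule k T} (hP2 : P ≤ filt 𝒜 2) (hI : P ⊓ filt 𝒜 1 = ⊥)

lemma proj_zero_add_proj_one_add_proj_two {x : T} (hx : x ∈ filt 𝒜 2) :
    proj 𝒜 0 x + proj 𝒜 1 x + proj 𝒜 2 x = x := by
  simpa [Finset.sum_range_succ] using sum_proj_of_mem_filt 𝒜 hx

include hP2 hI in
lemma injOn_proj_two : Set.InjOn (proj 𝒜 2) P := by
  refine (LinearMap.disjoint_ker_iff_injOn (f := proj 𝒜 2)).mp
    (LinearMap.disjoint_ker.mpr fun x hxP hx => ?_)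
  have hx1 : x ∈ filt 𝒜 1 := by
    rw [← proj_zero_add_proj_one_add_proj_two 𝒜 (hP2 hxP), hx, add_zero]
    exact add_mem (mem_filt_of_mem 𝒜 (Nat.zero_le 1) (SetLike.coe_mem _))
      (mem_filt_of_mem 𝒜 le_rfl (SetLike.coe_mem _))
  simpa [hI] using Submodule.mem_inf.mpr ⟨hxP, hx1⟩

noncomputable def leadingTermEquiv : P ≃ₗ[k] P.map (proj 𝒜 2) :=
  LinearEquiv.ofBijective ((proj 𝒜 2).submoduleMap P)
    ⟨LinearMap.submoduleMap_injective_of_injOn (injOn_proj_two 𝒜 hP2 hI),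
      LinearMap.submoduleMap_surjective _ _⟩

lemma proj_two_leadingTermEquiv_symm (r : P.map (proj 𝒜 2)) :
    proj 𝒜 2 ((leadingTermEquiv 𝒜 hP2 hI).symm r : T) = r :=
  congrArg Subtype.val ((leadingTermEquiv 𝒜 hP2 hI).apply_symm_apply r)

lemma leadingTermEquiv_symm_eq_of_mem {y : T} (hy : y ∈ P) (r : P.map (proj 𝒜 2))
    (hyr : proj 𝒜 2 y = r) : ((leadingTermEquiv 𝒜 hP2 hI).symm r : T) = y :=
  injOn_proj_two 𝒜 hP2 hI ((leadingTermEquiv 𝒜 hP2 hI).symm r).2 hy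
    (by rw [proj_two_leadingTermEquiv_symm, hyr])

/-- The pair `(α, β)`: minus the degree-one and degree-zero parts of the lifted relation. -/
noncomputable def lowerTerms : P.map (proj 𝒜 2) →ₗ[k] T × T :=
  -((proj 𝒜 1).prod (proj 𝒜 0) ∘ₗ P.subtype ∘ₗ (leadingTermEquiv 𝒜 hP2 hI).symm.toLinearMap)

lemma lowerTerms_apply (r : P.map (proj 𝒜 2)) :
    lowerTerms 𝒜 hP2 hI r = (-proj 𝒜 1 ((leadingTermEquiv 𝒜 hP2 hI).symm r : T),
      -proj 𝒜 0 ((leadingTermEquiv 𝒜 hP2 hI).symm r : T)) :=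
  rfl

lemma lowerTerms_mem (r : P.map (proj 𝒜 2)) :
    (lowerTerms 𝒜 hP2 hI r).1 ∈ 𝒜 1 ∧ (lowerTerms 𝒜 hP2 hI r).2 ∈ 𝒜 0 := by
  rw [lowerTerms_apply]
  exact ⟨neg_mem (SetLike.coe_mem _), neg_mem (SetLike.coe_mem _)⟩

lemma leadingTermEquiv_symm_eq_sub_lowerTerms (r : P.map (proj 𝒜 2)) :
    ((leadingTermEquiv 𝒜 hP2 hI).symm r : T) =
      r - (lowerTerms 𝒜 hP2 hI r).1 - (lowerTerms 𝒜 hP2 hI r).2 := by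
  have hy := proj_zero_add_proj_one_add_proj_two 𝒜 (hP2 ((leadingTermEquiv 𝒜 hP2 hI).symm r).2)
  rw [lowerTerms_apply, sub_neg_eq_add, sub_neg_eq_add,
    ← proj_two_leadingTermEquiv_symm 𝒜 hP2 hI r]
  exact hy.symm.trans (by abel)

lemma mem_iff_exists_eq_sub_lowerTerms {y : T} :
    y ∈ P ↔ ∃ r : P.map (proj 𝒜 2),
      y = r - (lowerTerms 𝒜 hP2 hI r).1 - (lowerTerms 𝒜 hP2 hI r).2 := by
  simp_rw [← leadingTermEquiv_symm_eq_sub_lowerTerms]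
  refine ⟨fun hy => ⟨leadingTermEquiv 𝒜 hP2 hI ⟨y, hy⟩, by simp⟩, ?_⟩
  rintro ⟨r, rfl⟩
  exact SetLike.coe_mem _

lemma lowerTerms_mul_mul {a b : T} (ha : a ∈ 𝒜 0) (hb : b ∈ 𝒜 0)
    (hab : ∀ x ∈ P, a * x * b ∈ P) (r : P.map (proj 𝒜 2))
    (hr : a * (r : T) * b ∈ P.map (proj 𝒜 2)) :
    lowerTerms 𝒜 hP2 hI ⟨a * r * b, hr⟩ =
      (a * (lowerTerms 𝒜 hP2 hI r).1 * b, a * (lowerTerms 𝒜 hP2 hI r).2 * b) := by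
  have hlift : ((leadingTermEquiv 𝒜 hP2 hI).symm ⟨a * r * b, hr⟩ : T) =
      a * (leadingTermEquiv 𝒜 hP2 hI).symm r * b :=
    leadingTermEquiv_symm_eq_of_mem 𝒜 hP2 hI (hab _ (SetLike.coe_mem _)) _
      (by rw [proj_mul_mul_of_mem_zero 𝒜 ha hb, proj_two_leadingTermEquiv_symm])
  simp only [lowerTerms_apply, hlift, proj_mul_mul_of_mem_zero 𝒜 ha hb, mul_neg, neg_mul]

lemma eq_lowerTerms_of_sub_mem (r : P.map (proj 𝒜 2)) {u v : T} (hu : u ∈ 𝒜 1) (hv : v ∈ 𝒜 0)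
    (hP : (r : T) - u - v ∈ P) : (u, v) = lowerTerms 𝒜 hP2 hI r := by
  have hr : (r : T) ∈ 𝒜 2 := by
    obtain ⟨x, -, hx⟩ := Submodule.mem_map.mp r.2
    exact hx ▸ SetLike.coe_mem _
  have hlift := leadingTermEquiv_symm_eq_of_mem 𝒜 hP2 hI hP r (by
    rw [map_sub, map_sub, proj_of_mem_same 𝒜 hr, proj_of_mem_ne 𝒜 hu (by norm_num),
      proj_of_mem_ne 𝒜 hv (by norm_num), sub_zero, sub_zero])
  rw [lowerTerms_apply, hlift, map_sub, map_sub, map_sub, map_sub,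
    proj_of_mem_same 𝒜 hu, proj_of_mem_same 𝒜 hv, proj_of_mem_ne 𝒜 hr (by norm_num),
    proj_of_mem_ne 𝒜 hr (by norm_num), proj_of_mem_ne 𝒜 hu (by norm_num),
    proj_of_mem_ne 𝒜 hv (by norm_num)]
  simp

end QuadraticRelations

/-- if `P ⊆ F²(T)` is a `B`-subbimodule of filtered quadratic
relations with `⟨P⟩ ∩ F¹(T) = {0}` (here already `P ∩ F¹(T) = {0}` is the
relevant consequence, Condition (I)), then there is a unique pair of
`B`-bimodule homomorphisms `α : R → U`, `β : R → B`, where `R = π(P)`, with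
`P = { x − α(x) − β(x) : x ∈ R }`. -/
theorem stmt14 {k T : Type*} [Field k] [Ring T] [Algebra k T]
    (𝒜 : ℕ → Submodule k T) [GradedAlgebra 𝒜]
    (P : Submodule k T) (hP2 : P ≤ filt 𝒜 2)
    (hbi : ∀ a ∈ 𝒜 0, ∀ b ∈ 𝒜 0, ∀ x ∈ P, a * x * b ∈ P)
    (hI : P ⊓ filt 𝒜 1 = ⊥) :
    letI R : Submodule k T := Submodule.map (GradedAlgebra.proj 𝒜 2) P
    ∃! αβ : ↥R →ₗ[k] T × T,
      (∀ x : ↥R, (αβ x).1 ∈ 𝒜 1 ∧ (αβ x).2 ∈ 𝒜 0) ∧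
      (∀ a ∈ 𝒜 0, ∀ b ∈ 𝒜 0, ∀ (x : ↥R) (hx : a * (x : T) * b ∈ R),
        αβ ⟨a * (x : T) * b, hx⟩ = (a * (αβ x).1 * b, a * (αβ x).2 * b)) ∧
      (P : Set T) = {y | ∃ x : ↥R, y = (x : T) - (αβ x).1 - (αβ x).2} := by
  refine ⟨lowerTerms 𝒜 hP2 hI, ⟨lowerTerms_mem 𝒜 hP2 hI,
    fun a ha b hb => lowerTerms_mul_mul 𝒜 hP2 hI ha hb (hbi a ha b hb),
    Set.ext fun y => mem_iff_exists_eq_sub_lowerTerms 𝒜 hP2 hI⟩, ?_⟩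
  rintro αβ ⟨hmem, -, hP⟩
  refine LinearMap.ext fun r => ?_
  have hsub : (r : T) - (αβ r).1 - (αβ r).2 ∈ P := by
    rw [← SetLike.mem_coe, hP]
    exact ⟨r, rfl⟩
  exact eq_lowerTerms_of_sub_mem 𝒜 hP2 hI r (hmem r).1 (hmem r).2 hsub
end
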